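/- arXiv:1301.4639 — 3 statements merged into one kernel-verified Lean document; each statement's English description precedes it below -/
import Mathlib

section
/- For any finite simple connected super-λ^(h) graph G (h ≥ 0 an integer), the persistence satisfies ρ^(h)(G) ≤ δ(G) − 1, where δ(G) is the minimum degree of G. -/
open SimpleGraph

variable {V : Type*}

/-- The degree of a vertex, as the cardinality of its neighbor set. -/
noncomputable def degN (G : SimpleGraph V) (v : V) : ℕ := (G.neighborSet v).ncard

/-- The minimum degree `δ(G)`. -/
noncomputable def minDeg (G : SimpleGraph V) : ℕ := sInf {k | ∃ v, degN G v = k}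

/-- `d_G(X)`: the number of edges of `G` with exactly one endpoint in `X`. -/
noncomputable def dOut (G : SimpleGraph V) (X : Set V) : ℕ :=
  {e ∈ G.edgeSet | ∃ x ∈ X, ∃ y ∈ Xᶜ, e = s(x, y)}.ncard

/-- `F` is an `h`-extra edge-cut of `G`: a set of edges of `G` whose removal disconnects `G`
and such that every connected component of `G - F` has more than `h` vertices. -/
def IsExtraEdgeCut (G : SimpleGraph V) (h : ℕ) (F : Set (Sym2 V)) : Prop :=
  F ⊆ G.edgeSet ∧ ¬(G.deleteEdges F).Connected ∧
    ∀ c : (G.deleteEdges F).ConnectedComponent, h < c.supp.ncard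

/-- `G` is `λ^(h)`-connected: an `h`-extra edge-cut exists. -/
def LambdaConn (G : SimpleGraph V) (h : ℕ) : Prop := ∃ F, IsExtraEdgeCut G h F

/-- The `h`-extra edge-connectivity `λ^(h)(G)`: the minimum cardinality of an
`h`-extra edge-cut. -/
noncomputable def lambdaH (G : SimpleGraph V) (h : ℕ) : ℕ :=
  sInf {k | ∃ F, IsExtraEdgeCut G h F ∧ F.ncard = k}

/-- `ξ_h(G)`: the minimum of `d_G(X)` over vertex sets `X` of size `h + 1` inducing a
connected subgraph. -/
noncomputable def xiH (G : SimpleGraph V) (h : ℕ) : ℕ :=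
  sInf {k | ∃ X : Set V, X.ncard = h + 1 ∧ (G.induce X).Connected ∧ dOut G X = k}

/-- `G` is super-`λ^(h)`: it is connected, `λ^(h)`-connected, `λ^(h)`-optimal
(`λ^(h)(G) = ξ_h(G)`), and every minimum `h`-extra edge-cut leaves a component with
exactly `h + 1` vertices. -/
def SuperLambda (G : SimpleGraph V) (h : ℕ) : Prop :=
  G.Connected ∧ LambdaConn G h ∧ lambdaH G h = xiH G h ∧
    ∀ F : Set (Sym2 V), IsExtraEdgeCut G h F → F.ncard = lambdaH G h →
      ∃ c : (G.deleteEdges F).ConnectedComponent, c.supp.ncard = h + 1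

/-- The persistence `ρ^(h)(G)`: the largest `m` such that `G - F` is super-`λ^(h)` for
every set `F` of at most `m` edges of `G`. -/
noncomputable def rhoH (G : SimpleGraph V) (h : ℕ) : ℕ :=
  sSup {m : ℕ | ∀ F : Set (Sym2 V), F ⊆ G.edgeSet → F.ncard ≤ m →
    SuperLambda (G.deleteEdges F) h}

/-- `ξ(G)`: the minimum edge-degree `deg x + deg y - 2` over the edges `xy` of `G`. -/
noncomputable def xiEdge (G : SimpleGraph V) : ℕ :=
  sInf {k | ∃ x y, G.Adj x y ∧ degN G x + degN G y - 2 = k}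

/-- `η(G)`: the number of edges of `G` whose edge-degree equals `ξ(G)`. -/
noncomputable def eta (G : SimpleGraph V) : ℕ :=
  {e ∈ G.edgeSet | ∃ x y, e = s(x, y) ∧ degN G x + degN G y - 2 = xiEdge G}.ncard

/-!
Deleting the at most `δ(G)` edges at a vertex `v` of minimum degree isolates `v`. As an
`h`-extra edge-cut already forces `G` to have a second vertex, the resulting graph is
disconnected, hence not super-`λ^(h)`; so no `m ≥ δ(G)` lies in the set whose supremum is
`ρ^(h)(G)`.
-/

namespace SimpleGraph

lemma nontrivial_of_connected_of_not_connected {G H : SimpleGraph V} (hG : G.Connected)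
    (hH : ¬H.Connected) : Nontrivial V := by
  by_contra hV
  rw [not_nontrivial_iff_subsingleton] at hV
  exact hH ((connected_iff H).2 ⟨Preconnected.of_subsingleton, hG.nonempty⟩)

lemma not_connected_deleteIncidenceSet [Nontrivial V] (G : SimpleGraph V) (x : V) :
    ¬(G.deleteIncidenceSet x).Connected := fun hconn =>
  have ⟨_, hadj⟩ := hconn.preconnected.exists_adj_of_nontrivial x
  (deleteIncidenceSet_adj.1 hadj).2.1 rfl

lemma ncard_incidenceSet (G : SimpleGraph V) (v : V) :
    (G.incidenceSet v).ncard = degN G v := by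
  classical
  rw [degN, ← Nat.card_coe_set_eq, ← Nat.card_coe_set_eq,
    Nat.card_congr (G.incidenceSetEquivNeighborSet v)]

lemma exists_degN_eq_minDeg [Nonempty V] (G : SimpleGraph V) : ∃ v, degN G v = minDeg G :=
  Nat.sInf_mem (s := {k | ∃ v, degN G v = k}) ⟨_, Classical.arbitrary V, rfl⟩

end SimpleGraph

theorem stmt1_general {V : Type*} (G : SimpleGraph V) (h : ℕ)
    (hs : SuperLambda G h) :
    rhoH G h ≤ minDeg G - 1 := by
  obtain ⟨hconn, ⟨F, _, hF, _⟩, _, _⟩ := hs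
  have : Nontrivial V := nontrivial_of_connected_of_not_connected hconn hF
  have := hconn.nonempty
  obtain ⟨v, hv⟩ := G.exists_degN_eq_minDeg
  refine csSup_le' fun m hm => ?_
  by_contra! hlt
  have hsuper := hm _ (G.incidenceSet_subset v) (by rw [G.ncard_incidenceSet, hv]; omega)
  exact G.not_connected_deleteIncidenceSet v hsuper.1

/-- For a super-`λ^(h)` graph, `ρ^(h)(G) ≤ δ(G) - 1`. -/
theorem stmt1 {V : Type*} [Fintype V] (G : SimpleGraph V) (h : ℕ)
    (hs : SuperLambda G h) :
    rhoH G h ≤ minDeg G - 1 :=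
  stmt1_general G h hs
end

section
/- Let G be a finite simple connected graph that is λ'-connected and λ'-optimal, and let F ⊆ E(G) with |F| ≤ δ(G) − 1, where δ(G) is the minimum degree of G. Then G − F is λ'-connected. -/
open SimpleGraph

variable {V : Type*}

/-!
Deleting fewer than `δ(G)` edges leaves no isolated vertex. A graph without isolated vertices
is `λ'`-connected as soon as it has two vertex-disjoint edges `ab`, `cd`: enlarge `{a, b}` to a
maximal set `Z` avoiding `{c, d}` and inducing no isolated vertex; by maximality `Zᶜ` induces no
isolated vertex either, so the edges between `Z` and `Zᶜ` form a `1`-extra edge-cut.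
If `G - F` had no two disjoint edges, it would be a star (it has at least four vertices). At a
leaf `v` at least `δ(G) - 1 ≥ |F|` edges of `G` are then in `F`, so every edge of `F` contains
every leaf, which forces `F = ∅`; but then `G` itself is a star, whereas any `λ'`-connected
graph has two disjoint edges.
-/

def NoIsolatedOn (H : SimpleGraph V) (X : Set V) : Prop := ∀ v ∈ X, ∃ u ∈ X, H.Adj v u

lemma NoIsolatedOn.insert {H : SimpleGraph V} {X : Set V} {v u : V} (hX : NoIsolatedOn H X)
    (hvu : H.Adj v u) (hu : u ∈ X) : NoIsolatedOn H (insert v X) := by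
  rintro w (rfl | hw)
  · exact ⟨u, Set.mem_insert_of_mem _ hu, hvu⟩
  · obtain ⟨u', hu', hwu'⟩ := hX w hw
    exact ⟨u', Set.mem_insert_of_mem _ hu', hwu'⟩

lemma noIsolatedOn_pair {H : SimpleGraph V} {a b : V} (hab : H.Adj a b) :
    NoIsolatedOn H {a, b} := by
  rintro v (rfl | rfl)
  · exact ⟨b, by simp, hab⟩
  · exact ⟨a, by simp, hab.symm⟩

lemma one_lt_ncard_supp_iff_forall_exists_adj [Finite V] (K : SimpleGraph V) :
    (∀ c : K.ConnectedComponent, 1 < c.supp.ncard) ↔ ∀ v, ∃ u, K.Adj v u := by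
  constructor
  · intro h v
    obtain ⟨u, hu, huv⟩ := Set.exists_ne_of_one_lt_ncard (h (K.connectedComponentMk v)) v
    obtain ⟨p⟩ := (ConnectedComponent.exact hu).symm
    cases p with
    | nil => exact absurd rfl huv
    | cons hadj _ => exact ⟨_, hadj⟩
  · intro h c
    induction c using ConnectedComponent.ind with
    | _ v =>
      obtain ⟨u, hvu⟩ := h v
      exact (Set.one_lt_ncard_iff).2
        ⟨v, u, rfl, (ConnectedComponent.connectedComponentMk_eq_of_adj hvu).symm, hvu.ne⟩

lemma exists_adj_of_lambdaConn [Finite V] {G : SimpleGraph V} (hG : LambdaConn G 1) (v : V) :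
    ∃ u, G.Adj v u := by
  obtain ⟨S, -, -, hS⟩ := hG
  obtain ⟨u, hvu⟩ := (one_lt_ncard_supp_iff_forall_exists_adj _).1 hS v
  exact ⟨u, (deleteEdges_adj.1 hvu).1⟩

lemma exists_disjoint_adj_of_lambdaConn [Finite V] [Nonempty V] {G : SimpleGraph V}
    (hG : LambdaConn G 1) :
    ∃ a b c d, G.Adj a b ∧ G.Adj c d ∧ a ≠ c ∧ a ≠ d ∧ b ≠ c ∧ b ≠ d := by
  obtain ⟨S, -, hdisc, hcomp⟩ := hG
  have hS := (one_lt_ncard_supp_iff_forall_exists_adj _).1 hcomp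
  obtain ⟨a, c, hac⟩ : ∃ a c, ¬(G.deleteEdges S).Reachable a c := by
    by_contra! h
    exact hdisc ⟨h⟩
  obtain ⟨b, hab⟩ := hS a
  obtain ⟨d, hcd⟩ := hS c
  refine ⟨a, b, c, d, (deleteEdges_adj.1 hab).1, (deleteEdges_adj.1 hcd).1, ?_, ?_, ?_, ?_⟩ <;>
    rintro rfl
  · exact hac .rfl
  · exact hac hcd.reachable.symm
  · exact hac hab.reachable
  · exact hac (hab.reachable.trans hcd.reachable.symm)

lemma lambdaConn_one_of_partition [Finite V] {H : SimpleGraph V} {Z : Set V}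
    (hZ : Z.Nonempty) (hZc : Zᶜ.Nonempty) (hZiso : NoIsolatedOn H Z)
    (hZciso : NoIsolatedOn H Zᶜ) : LambdaConn H 1 := by
  set F : Set (Sym2 V) := {e | e ∈ H.edgeSet ∧ ∃ x ∈ e, ∃ y ∈ e, x ∈ Z ∧ y ∉ Z}
  have hadj : ∀ {x y}, (H.deleteEdges F).Adj x y ↔ H.Adj x y ∧ (x ∈ Z ↔ y ∈ Z) := by
    intro x y
    simp only [deleteEdges_adj, F, Set.mem_ofPred_eq, mem_edgeSet, Sym2.mem_iff]
    grind
  obtain ⟨a, ha⟩ := hZ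
  obtain ⟨c, hc⟩ := hZc
  refine ⟨F, fun e he => he.1, fun hconn => ?_, ?_⟩
  · obtain ⟨p⟩ := hconn.preconnected a c
    obtain ⟨d, -, hd, hd'⟩ := p.exists_boundary_dart Z ha hc
    exact hd' ((hadj.1 d.adj).2.1 hd)
  · refine (one_lt_ncard_supp_iff_forall_exists_adj _).2 fun v => ?_
    by_cases hv : v ∈ Z
    · obtain ⟨u, hu, hvu⟩ := hZiso v hv
      exact ⟨u, hadj.2 ⟨hvu, iff_of_true hv hu⟩⟩
    · obtain ⟨u, hu, hvu⟩ := hZciso v hv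
      exact ⟨u, hadj.2 ⟨hvu, iff_of_false hv hu⟩⟩

lemma exists_partition_of_noIsolatedOn [Finite V] {H : SimpleGraph V}
    (hH : ∀ v, ∃ u, H.Adj v u) {X Y : Set V} (hXY : Disjoint X Y) (hX : NoIsolatedOn H X)
    (hY : NoIsolatedOn H Y) :
    ∃ Z, X ⊆ Z ∧ Y ⊆ Zᶜ ∧ NoIsolatedOn H Z ∧ NoIsolatedOn H Zᶜ := by
  obtain ⟨Z, hXZ, hmax⟩ :=
    Finite.exists_le_maximal (p := fun Z => Disjoint Z Y ∧ NoIsolatedOn H Z) ⟨hXY, hX⟩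
  obtain ⟨hZY, hZ⟩ := hmax.prop
  refine ⟨Z, hXZ, hZY.subset_compl_left, hZ, fun v hv => ?_⟩
  by_cases hvY : v ∈ Y
  · obtain ⟨u, hu, hvu⟩ := hY v hvY
    exact ⟨u, hZY.subset_compl_left hu, hvu⟩
  obtain ⟨u, hvu⟩ := hH v
  refine ⟨u, fun hu => hv ?_, hvu⟩
  -- otherwise `v` could be added to the maximal set `Z`
  have hins : Disjoint (insert v Z) Y ∧ NoIsolatedOn H (insert v Z) :=
    ⟨Set.disjoint_insert_left.2 ⟨hvY, hZY⟩, hZ.insert hvu hu⟩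
  exact hmax.le_of_ge hins (Set.subset_insert v Z) (Set.mem_insert v Z)

lemma lambdaConn_one_of_disjoint_adj [Finite V] {H : SimpleGraph V}
    (hH : ∀ v, ∃ u, H.Adj v u) {a b c d : V} (hab : H.Adj a b) (hcd : H.Adj c d)
    (hac : a ≠ c) (had : a ≠ d) (hbc : b ≠ c) (hbd : b ≠ d) : LambdaConn H 1 := by
  have hdisj : Disjoint ({a, b} : Set V) {c, d} := by simp [hac.symm, had.symm, hbc.symm, hbd.symm]
  obtain ⟨Z, hXZ, hYZ, hZ, hZc⟩ :=
    exists_partition_of_noIsolatedOn hH hdisj (noIsolatedOn_pair hab) (noIsolatedOn_pair hcd)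
  exact lambdaConn_one_of_partition ⟨a, hXZ (by simp)⟩ ⟨c, hYZ (by simp)⟩ hZ hZc

lemma exists_ne_ne_ne [Finite V] (h4 : 4 ≤ Nat.card V) (a b c : V) :
    ∃ w, w ≠ a ∧ w ≠ b ∧ w ≠ c := by
  by_contra! h
  have huniv : (Set.univ : Set V) ⊆ {a, b, c} := fun w _ => by
    simp only [Set.mem_insert_iff, Set.mem_singleton_iff]
    tauto
  have := Set.ncard_le_ncard huniv
  have := Set.ncard_insert_le a {b, c}
  have := Set.ncard_insert_le b {c}
  simp only [Set.ncard_univ, Set.ncard_singleton] at *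
  omega

lemma four_le_card_of_ne [Finite V] {a b c d : V} (hab : a ≠ b) (hac : a ≠ c) (had : a ≠ d)
    (hbc : b ≠ c) (hbd : b ≠ d) (hcd : c ≠ d) : 4 ≤ Nat.card V := by
  have : ({a, b, c, d} : Set V).ncard = 4 := by
    rw [Set.ncard_insert_of_notMem (by simp [*]), Set.ncard_insert_of_notMem (by simp [*]),
      Set.ncard_pair hcd]
  exact this ▸ Set.ncard_le_card _

lemma exists_center_of_edges_meet [Finite V] {H : SimpleGraph V} (h4 : 4 ≤ Nat.card V)
    (hH : ∀ v, ∃ u, H.Adj v u)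
    (hmeet : ∀ a b c d, H.Adj a b → H.Adj c d → a = c ∨ a = d ∨ b = c ∨ b = d) :
    ∃ z, ∀ x y, H.Adj x y → x = z ∨ y = z := by
  obtain ⟨a⟩ : Nonempty V := (Nat.card_pos_iff.1 (by omega)).1
  obtain ⟨b, hab⟩ := hH a
  by_contra! hno
  have hthrough : ∀ {p q}, H.Adj p q → ∃ r, H.Adj q r ∧ r ≠ p := by
    intro p q hpq
    obtain ⟨x, y, hxy, hxp, hyp⟩ := hno p
    rcases hmeet p q x y hpq hxy with rfl | rfl | rfl | rfl
    · exact absurd rfl hxp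
    · exact absurd rfl hyp
    · exact ⟨y, hxy, hyp⟩
    · exact ⟨x, hxy.symm, hxp⟩
  obtain ⟨c, hbc, hca⟩ := hthrough hab
  obtain ⟨d, had, hdb⟩ := hthrough hab.symm
  -- so `abc` is a triangle, and an edge at a fourth vertex cannot meet all three of its sides
  have hcd : c = d := by grind [hmeet b c a d hbc had, hab.ne]
  subst hcd
  obtain ⟨w, hwa, hwb, hwc⟩ := exists_ne_ne_ne h4 a b c
  obtain ⟨u, hwu⟩ := hH w
  grind [hmeet w u a b hwu hab, hmeet w u b c hwu hbc, hmeet w u a c hwu had, hab.ne, hbc.ne]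

lemma minDeg_le_degN (G : SimpleGraph V) (v : V) : minDeg G ≤ degN G v :=
  Nat.sInf_le ⟨v, rfl⟩

lemma lt_degN_of_le_minDeg_sub_one [Finite V] [Nonempty V] {G : SimpleGraph V}
    (hG : ∀ v, ∃ u, G.Adj v u) {k : ℕ} (hk : k ≤ minDeg G - 1) (v : V) : k < degN G v := by
  obtain ⟨w, hw⟩ : ∃ w, degN G w = minDeg G :=
    Nat.sInf_mem (⟨_, Classical.arbitrary V, rfl⟩ : {k | ∃ v, degN G v = k}.Nonempty)
  have hw_pos : 0 < degN G w := (Set.ncard_pos).2 (hG w)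
  have := minDeg_le_degN G v
  omega

lemma ncard_image_mk_left (v : V) (s : Set V) : ((fun u => s(v, u)) '' s).ncard = s.ncard :=
  Set.ncard_image_of_injective s fun _ _ => Sym2.congr_right.1

lemma exists_adj_deleteEdges_of_ncard_lt [Finite V] {G : SimpleGraph V} {F : Set (Sym2 V)}
    {v : V} (hF : F.ncard < degN G v) : ∃ u, (G.deleteEdges F).Adj v u := by
  by_contra! h
  have hsub : (fun u => s(v, u)) '' G.neighborSet v ⊆ F := by
    rintro _ ⟨u, hvu, rfl⟩
    by_contra hu
    exact h u (deleteEdges_adj.2 ⟨hvu, hu⟩)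
  have := Set.ncard_le_ncard hsub
  rw [ncard_image_mk_left] at this
  exact absurd hF (not_lt.2 this)

lemma eq_empty_of_deleteEdges_adj_center [Finite V] {G : SimpleGraph V} {F : Set (Sym2 V)}
    {z : V} (h4 : 4 ≤ Nat.card V) (hF : ∀ v, F.ncard < degN G v)
    (hz : ∀ x y, (G.deleteEdges F).Adj x y → x = z ∨ y = z) : F = ∅ := by
  refine Set.eq_empty_of_forall_notMem (Sym2.ind fun p q he => ?_)
  obtain ⟨v, hvz, hvp, hvq⟩ := exists_ne_ne_ne h4 z p q
  -- the edges at `v` avoiding `z` all lie in `F`, and there are at least `|F|` of them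
  set B := (fun u => s(v, u)) '' (G.neighborSet v \ {z})
  have hBF : B ⊆ F := by
    rintro _ ⟨u, ⟨hvu, huz⟩, rfl⟩
    by_contra hu
    rcases hz v u (deleteEdges_adj.2 ⟨hvu, hu⟩) with h | h
    · exact hvz h
    · exact huz h
  have hFB : F.ncard ≤ B.ncard := by
    have := hF v
    have := Set.pred_ncard_le_ncard_sdiff_singleton (G.neighborSet v) z
    rw [ncard_image_mk_left]
    unfold degN at *
    omega
  rw [← Set.eq_of_subset_of_ncard_le hBF hFB] at he
  obtain ⟨u, -, hu⟩ := he
  have : v ∈ s(p, q) := hu ▸ Sym2.mem_mk_left v u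
  rcases Sym2.mem_iff.1 this with h | h
  · exact hvp h
  · exact hvq h

theorem stmt2_general {V : Type*} [Fintype V] (G : SimpleGraph V)
    (hconn : G.Connected) (hl : LambdaConn G 1)
    (F : Set (Sym2 V)) (hFcard : F.ncard ≤ minDeg G - 1) :
    LambdaConn (G.deleteEdges F) 1 := by
  have : Nonempty V := hconn.nonempty
  obtain ⟨a, b, c, d, hab, hcd, hac, had, hbc, hbd⟩ := exists_disjoint_adj_of_lambdaConn hl
  have hF : ∀ v, F.ncard < degN G v :=
    lt_degN_of_le_minDeg_sub_one (exists_adj_of_lambdaConn hl) hFcard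
  have hH : ∀ v, ∃ u, (G.deleteEdges F).Adj v u :=
    fun v => exists_adj_deleteEdges_of_ncard_lt (hF v)
  by_contra hnot
  have hmeet : ∀ a b c d, (G.deleteEdges F).Adj a b → (G.deleteEdges F).Adj c d →
      a = c ∨ a = d ∨ b = c ∨ b = d := by
    intro a b c d hab hcd
    by_contra! h
    exact hnot (lambdaConn_one_of_disjoint_adj hH hab hcd h.1 h.2.1 h.2.2.1 h.2.2.2)
  have h4 : 4 ≤ Nat.card V := four_le_card_of_ne hab.ne hac had hbc hbd hcd.ne
  obtain ⟨z, hz⟩ := exists_center_of_edges_meet h4 hH hmeet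
  rw [eq_empty_of_deleteEdges_adj_center h4 hF hz, deleteEdges_empty] at hz
  grind [hz a b hab, hz c d hcd]

/-- If `G` is `λ'`-connected and `λ'`-optimal and `|F| ≤ δ(G) - 1`, then `G - F` is
`λ'`-connected. -/
theorem stmt2 {V : Type*} [Fintype V] (G : SimpleGraph V)
    (hconn : G.Connected) (hl : LambdaConn G 1) (hopt : lambdaH G 1 = xiEdge G)
    (F : Set (Sym2 V)) (hF : F ⊆ G.edgeSet) (hFcard : F.ncard ≤ minDeg G - 1) :
    LambdaConn (G.deleteEdges F) 1 :=
  stmt2_general G hconn hl F hFcard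
end

section
/- Let G be a finite simple connected graph that is λ''-connected and super-λ'. If the number η(G) of edges of G whose edge-degree equals ξ(G) satisfies η(G) ≥ δ(G), then ρ'(G) ≥ min{λ''(G) − ξ(G) − 1, δ(G) − 1}, where δ(G) is the minimum degree of G. -/
/-!
Let `F` be a set of at most `min (λ'' - ξ - 1) (δ - 1)` edges of `G` and `G' = G - F`.
Since `|F| < λ''` and `|F| < δ`, the graph `G'` is connected, and since `|F| < η`, an
edge of edge-degree `ξ` survives, so `ξ_1(G') ≤ ξ`. If `F'` is a `1`-extra cut of `G'` with
`|F'| ≤ ξ`, then `|F ∪ F'| < λ''`, so `F ∪ F'` is not a `2`-extra cut of `G` and some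
component of `G' - F'` is a single edge; hence no `1`-extra cut of `G'` is smaller than
`ξ_1(G')`, and the cuts of that size isolate an edge. Each edge of `F` meets every leaf of
`G'`, so `G'` has at most two leaves and is not a star; then the Esfahanian–Hakimi argument
produces a `1`-extra cut of `G'` with `ξ_1(G')` edges: the boundary of an edge of minimum
edge-degree, or, if that isolates a vertex, the boundary of a vertex together with all its
leaves.
-/

open SimpleGraph

variable {V : Type*}

namespace SimpleGraph

variable {G : SimpleGraph V} {X : Set V} {F : Set (Sym2 V)}

def edgeBoundary (G : SimpleGraph V) (X : Set V) : Set (Sym2 V) :=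
  {e ∈ G.edgeSet | ∃ x ∈ X, ∃ y ∈ Xᶜ, e = s(x, y)}

theorem dOut_eq_ncard_edgeBoundary (G : SimpleGraph V) (X : Set V) :
    dOut G X = (G.edgeBoundary X).ncard := rfl

theorem edgeBoundary_subset_edgeSet : G.edgeBoundary X ⊆ G.edgeSet := fun _ he => he.1

theorem mk_mem_edgeBoundary_iff {x y : V} (h : G.Adj x y) :
    s(x, y) ∈ G.edgeBoundary X ↔ ¬(x ∈ X ↔ y ∈ X) := by
  constructor
  · rintro ⟨-, a, ha, b, hb, he⟩
    rw [Set.mem_compl_iff] at hb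
    rcases Sym2.eq_iff.1 he with ⟨rfl, rfl⟩ | ⟨rfl, rfl⟩ <;> tauto
  · intro hxy
    by_cases hx : x ∈ X
    · exact ⟨h, x, hx, y, fun hy => hxy (iff_of_true hx hy), rfl⟩
    · exact ⟨h, y, by tauto, x, hx, Sym2.eq_swap⟩

theorem mem_iff_mem_of_reachable_deleteEdges_edgeBoundary {a b : V}
    (h : (G.deleteEdges (G.edgeBoundary X)).Reachable a b) : a ∈ X ↔ b ∈ X := by
  obtain ⟨w⟩ := h
  induction w with
  | nil => rfl
  | cons hadj _ ih =>
    obtain ⟨hadj, hnot⟩ := deleteEdges_adj.1 hadj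
    exact Iff.trans (not_not.1 fun h => hnot ((mk_mem_edgeBoundary_iff hadj).2 h)) ih

theorem eq_univ_of_forall_neighborSet_subset (hG : G.Connected) {a : V} (ha : a ∈ X)
    (hX : ∀ v ∈ X, G.neighborSet v ⊆ X) : X = Set.univ := by
  have hempty : G.edgeBoundary X = ∅ :=
    Set.eq_empty_of_forall_notMem fun _ ⟨he, x, hx, _, hy, hxy⟩ =>
      hy (hX x hx (by rwa [hxy] at he))
  refine Set.eq_univ_of_forall fun b => (mem_iff_mem_of_reachable_deleteEdges_edgeBoundary
    (G := G) ?_).1 ha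
  rw [hempty, deleteEdges_empty]
  exact hG.preconnected a b

theorem supp_connectedComponentMk_deleteEdges_edgeBoundary (hX : (G.induce X).Connected)
    {a : V} (ha : a ∈ X) :
    ((G.deleteEdges (G.edgeBoundary X)).connectedComponentMk a).supp = X := by
  ext b
  rw [ConnectedComponent.mem_supp_iff, ConnectedComponent.eq]
  refine ⟨fun h => (mem_iff_mem_of_reachable_deleteEdges_edgeBoundary h).2 ha, fun hb => ?_⟩
  obtain ⟨w⟩ := hX.preconnected ⟨b, hb⟩ ⟨a, ha⟩
  let f : G.induce X →g G.deleteEdges (G.edgeBoundary X) :=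
    ⟨Subtype.val, fun {u v} h =>
      deleteEdges_adj.2 ⟨h, fun hb =>
        (mk_mem_edgeBoundary_iff (G := G) h).1 hb (iff_of_true u.2 v.2)⟩⟩
  exact (w.map f).reachable

theorem edgeBoundary_supp_subset (c : (G.deleteEdges F).ConnectedComponent) :
    G.edgeBoundary c.supp ⊆ F := by
  rintro _ ⟨he, u, hu, w, hw, rfl⟩
  by_contra hF
  refine hw ?_
  rw [ConnectedComponent.mem_supp_iff] at hu ⊢
  exact hu ▸ ConnectedComponent.eq.2 (deleteEdges_adj.2 ⟨he, hF⟩).symm.reachable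

theorem edgeBoundary_deleteEdges_subset :
    (G.deleteEdges F).edgeBoundary X ⊆ G.edgeBoundary X := by
  rintro _ ⟨he, h⟩
  exact ⟨(edgeSet_deleteEdges F ▸ he).1, h⟩

theorem degN_eq_ncard_incidenceSet (G : SimpleGraph V) (v : V) :
    degN G v = (G.incidenceSet v).ncard := by
  classical exact (Set.ncard_congr' (G.incidenceSetEquivNeighborSet v)).symm

theorem dOut_singleton (v : V) : dOut G {v} = degN G v := by
  rw [dOut_eq_ncard_edgeBoundary, degN_eq_ncard_incidenceSet]
  congr 1
  ext e
  induction e using Sym2.ind with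
  | _ a b =>
    by_cases hab : G.Adj a b
    · rw [mk_mem_edgeBoundary_iff hab, mk'_mem_incidenceSet_iff]
      simp only [Set.mem_singleton_iff, hab, true_and]
      have := hab.ne
      grind
    · exact iff_of_false (fun h => hab (edgeBoundary_subset_edgeSet h)) fun h => hab h.1

theorem dOut_pair [Finite V] {x y : V} (h : G.Adj x y) :
    dOut G {x, y} = degN G x + degN G y - 2 := by
  have hunion :
      G.incidenceSet x ∪ G.incidenceSet y = insert s(x, y) (G.edgeBoundary {x, y}) := by
    ext e
    induction e using Sym2.ind with
    | _ a b =>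
      by_cases hab : G.Adj a b
      · rw [Set.mem_insert_iff, mk_mem_edgeBoundary_iff hab, Set.mem_union,
          mk'_mem_incidenceSet_iff, mk'_mem_incidenceSet_iff, Sym2.eq_iff]
        simp only [Set.mem_insert_iff, Set.mem_singleton_iff, hab, true_and]
        have := hab.ne
        have := h.ne
        grind
      · refine iff_of_false (fun h' => hab (h'.elim (·.1) (·.1))) ?_
        rintro (he | he)
        · rcases Sym2.eq_iff.1 he with ⟨rfl, rfl⟩ | ⟨rfl, rfl⟩
          exacts [hab h, hab h.symm]
        · exact hab (edgeBoundary_subset_edgeSet he)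
  have hnot : s(x, y) ∉ G.edgeBoundary {x, y} := fun hb =>
    (mk_mem_edgeBoundary_iff h).1 hb (iff_of_true (by simp) (by simp))
  have hcard := Set.ncard_union_add_ncard_inter (G.incidenceSet x) (G.incidenceSet y)
  rw [hunion, G.incidenceSet_inter_incidenceSet_of_adj h, Set.ncard_insert_of_notMem hnot,
    Set.ncard_singleton] at hcard
  rw [dOut_eq_ncard_edgeBoundary, degN_eq_ncard_incidenceSet, degN_eq_ncard_incidenceSet]
  omega

theorem dOut_deleteEdges_le [Finite V] : dOut (G.deleteEdges F) X ≤ dOut G X :=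
  Set.ncard_le_ncard edgeBoundary_deleteEdges_subset

theorem dOut_supp_le_ncard [Finite V] (c : (G.deleteEdges F).ConnectedComponent) :
    dOut G c.supp ≤ F.ncard :=
  Set.ncard_le_ncard (edgeBoundary_supp_subset c)

theorem degN_deleteEdges_add_ncard_inter [Finite V] (v : V) :
    degN (G.deleteEdges F) v + (G.incidenceSet v ∩ F).ncard = degN G v := by
  have hdiff : (G.deleteEdges F).incidenceSet v = G.incidenceSet v \ F := by
    ext e
    simp only [incidenceSet, edgeSet_deleteEdges, Set.mem_ofPred_eq, Set.mem_sdiff]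
    tauto
  rw [degN_eq_ncard_incidenceSet, degN_eq_ncard_incidenceSet, hdiff, add_comm,
    Set.ncard_inter_add_ncard_sdiff_eq_ncard]

theorem mem_of_mem_of_ncard_add_degN_deleteEdges_le [Finite V] {p : V} {e : Sym2 V}
    (hp : F.ncard + degN (G.deleteEdges F) p ≤ degN G p) (he : e ∈ F) : p ∈ e := by
  have hinter := degN_deleteEdges_add_ncard_inter (G := G) (F := F) p
  have hF : G.incidenceSet p ∩ F = F :=
    Set.eq_of_subset_of_ncard_le Set.inter_subset_right (by omega)
  rw [← hF] at he
  exact he.1.2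

theorem adj_of_induce_pair_connected {x y : V} (hxy : x ≠ y)
    (h : (G.induce {x, y}).Connected) : G.Adj x y := by
  obtain ⟨w⟩ := h.preconnected ⟨x, by simp⟩ ⟨y, by simp⟩
  cases w with
  | nil => exact absurd rfl hxy
  | @cons _ u _ hadj _ =>
    have hu : u.1 = x ∨ u.1 = y := u.2
    have hne : u.1 ≠ x := fun hux => (induce_adj.1 hadj).ne hux.symm
    exact hu.resolve_left hne ▸ induce_adj.1 hadj

theorem induce_insert_connected_of_forall_adj {x : V} {P : Set V}
    (h : ∀ p ∈ P, G.Adj x p) : (G.induce (insert x P)).Connected := by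
  refine induce_connected_of_patches x (Set.mem_insert x P) fun {v} hv => ?_
  rcases hv with rfl | hv
  · exact ⟨{v}, by simp, rfl, rfl, Reachable.refl _⟩
  · exact ⟨{x, v}, Set.insert_subset_insert (by simpa using hv), by simp, by simp,
      (induce_pair_connected_of_adj (h v hv)).preconnected _ _⟩

theorem isExtraEdgeCut_one_edgeBoundary [Finite V]
    (hX : (G.induce X).Connected) (hX1 : 1 < X.ncard) (hXc : Xᶜ.Nonempty)
    (hout : ∀ z ∉ X, ∃ w ∉ X, G.Adj z w) : IsExtraEdgeCut G 1 (G.edgeBoundary X) := by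
  obtain ⟨⟨a, ha⟩⟩ := hX.nonempty
  obtain ⟨b, hb⟩ := hXc
  refine ⟨edgeBoundary_subset_edgeSet, fun hconn => hb ?_, fun c => ?_⟩
  · exact (mem_iff_mem_of_reachable_deleteEdges_edgeBoundary (hconn.preconnected a b)).1 ha
  obtain ⟨v, hv⟩ := c.nonempty_supp
  rw [ConnectedComponent.mem_supp_iff] at hv
  subst hv
  by_cases hvX : v ∈ X
  · rwa [supp_connectedComponentMk_deleteEdges_edgeBoundary hX hvX]
  · obtain ⟨w, hwX, hvw⟩ := hout v hvX
    have hadj : (G.deleteEdges (G.edgeBoundary X)).Adj v w :=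
      deleteEdges_adj.2 ⟨hvw, fun hb =>
        (mk_mem_edgeBoundary_iff hvw).1 hb (iff_of_false hvX hwX)⟩
    refine (Set.one_lt_ncard_iff).2 ⟨v, w, rfl, ?_, hvw.ne⟩
    exact (ConnectedComponent.eq.2 hadj.reachable).symm

theorem minDeg_le_degN (G : SimpleGraph V) (v : V) : minDeg G ≤ degN G v :=
  Nat.sInf_le ⟨v, rfl⟩

theorem one_le_degN [Finite V] {x y : V} (h : G.Adj x y) : 1 ≤ degN G x :=
  (Set.ncard_pos).2 ⟨y, h⟩

theorem xiH_one_le_dOut_pair {x y : V} (h : G.Adj x y) : xiH G 1 ≤ dOut G {x, y} :=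
  Nat.sInf_le ⟨{x, y}, Set.ncard_pair h.ne, induce_pair_connected_of_adj h, rfl⟩

theorem exists_adj_dOut_pair_eq_xiH_one {x y : V} (h : G.Adj x y) :
    ∃ a b, G.Adj a b ∧ dOut G {a, b} = xiH G 1 := by
  obtain ⟨X, hX2, hXconn, hX⟩ := Nat.sInf_mem (⟨_, {x, y}, Set.ncard_pair h.ne,
    induce_pair_connected_of_adj h, rfl⟩ :
      {k | ∃ X : Set V, X.ncard = 1 + 1 ∧ (G.induce X).Connected ∧ dOut G X = k}.Nonempty)
  obtain ⟨a, b, hab, rfl⟩ := Set.ncard_eq_two.1 hX2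
  exact ⟨a, b, adj_of_induce_pair_connected hab hXconn, hX⟩

theorem xiH_one_le_ncard_of_supp_ncard_eq_two [Finite V]
    (c : (G.deleteEdges F).ConnectedComponent) (hc : c.supp.ncard = 2) : xiH G 1 ≤ F.ncard := by
  have hconn : (G.induce c.supp).Connected :=
    (ConnectedComponent.maximal_connected_induce_supp c).1.mono fun _ _ h =>
      induce_adj.2 (deleteEdges_adj.1 (induce_adj.1 h)).1
  have hxi : xiH G 1 ≤ dOut G c.supp := Nat.sInf_le ⟨c.supp, hc, hconn, rfl⟩
  exact hxi.trans (dOut_supp_le_ncard c)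

theorem superLambda_one_of_forall_ncard_le_xiH [Finite V] (hG : G.Connected)
    (hcut : ∃ F, IsExtraEdgeCut G 1 F ∧ F.ncard ≤ xiH G 1)
    (hsmall : ∀ F, IsExtraEdgeCut G 1 F → F.ncard ≤ xiH G 1 →
      ∃ c : (G.deleteEdges F).ConnectedComponent, c.supp.ncard = 2) :
    SuperLambda G 1 := by
  have hge : ∀ F, IsExtraEdgeCut G 1 F → xiH G 1 ≤ F.ncard := fun F hF => by
    by_contra! hlt
    obtain ⟨c, hc⟩ := hsmall F hF hlt.le
    exact hlt.not_ge (xiH_one_le_ncard_of_supp_ncard_eq_two c hc)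
  obtain ⟨F₀, hF₀, hF₀le⟩ := hcut
  have hlam : lambdaH G 1 = xiH G 1 := by
    have hle : lambdaH G 1 ≤ F₀.ncard := Nat.sInf_le ⟨F₀, hF₀, rfl⟩
    refine le_antisymm (hle.trans hF₀le) ?_
    unfold lambdaH
    refine le_csInf ⟨_, F₀, hF₀, rfl⟩ ?_
    rintro _ ⟨F, hF, rfl⟩
    exact hge F hF
  exact ⟨hG, ⟨F₀, hF₀⟩, hlam, fun F hF hmin => hsmall F hF (hmin.trans hlam).le⟩

theorem exists_isExtraEdgeCut_one_of_two_leaves [Finite V] (hG : G.Connected) {x y z : V}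
    (hyz : y ≠ z) (hy : G.neighborSet y = {x}) (hz : G.neighborSet z = {x})
    (hstar : ∃ v ≠ x, G.neighborSet v ≠ {x}) :
    ∃ F, IsExtraEdgeCut G 1 F ∧ F.ncard + 2 ≤ degN G x := by
  set P := {p | G.neighborSet p = {x}}
  have hP : ∀ p ∈ P, G.Adj x p := fun p (hp : G.neighborSet p = {x}) =>
    (show x ∈ G.neighborSet p by rw [hp]; rfl).symm
  have : Nontrivial V := ⟨⟨x, y, (hP y hy).ne⟩⟩
  have hyzN : {y, z} ⊆ G.neighborSet x := Set.pair_subset (hP y hy) (hP z hz)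
  have hbdry :
      G.edgeBoundary (insert x P) ⊆ (fun w => s(x, w)) '' (G.neighborSet x \ {y, z}) := by
    rintro _ ⟨he, a, ha, b, hb, rfl⟩
    rw [Set.mem_compl_iff] at hb
    rcases ha with rfl | (ha : G.neighborSet a = {x})
    · refine ⟨b, ⟨he, fun hbyz => hb (Or.inr ?_)⟩, rfl⟩
      rcases hbyz with rfl | rfl
      exacts [hy, hz]
    · have hbx : b ∈ G.neighborSet a := he
      rw [ha, Set.mem_singleton_iff] at hbx
      exact absurd (hbx ▸ Set.mem_insert x P) hb
  refine ⟨_, isExtraEdgeCut_one_edgeBoundary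
    (induce_insert_connected_of_forall_adj hP) ?_ ?_ fun w hw => ?_, ?_⟩
  · exact (Set.one_lt_ncard_iff).2 ⟨x, y, Set.mem_insert x P, Or.inr hy, (hP y hy).ne⟩
  · obtain ⟨v, hvx, hv⟩ := hstar
    exact ⟨v, by rintro (rfl | hvP); exacts [hvx rfl, hv hvP]⟩
  · by_contra! hall
    refine hw (Or.inr ((Set.Nonempty.subset_singleton_iff ?_).1 fun u hu => ?_))
    · exact hG.preconnected.exists_adj_of_nontrivial w
    · rcases not_not.1 fun hu' => hall u hu' hu with rfl | (hu' : G.neighborSet u = {x})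
      · rfl
      · have hwx : w ∈ G.neighborSet u := (show G.Adj w u from hu).symm
        rw [hu'] at hwx
        exact absurd (Or.inl hwx) hw
  · have hcard := (Set.ncard_le_ncard hbdry).trans Set.ncard_image_le
    rw [Set.ncard_sdiff hyzN, Set.ncard_pair hyz] at hcard
    have := Set.ncard_le_ncard hyzN
    rw [Set.ncard_pair hyz] at this
    unfold degN
    omega

/-- Either `z` is a second leaf at `x`, or `x`, `y`, `z` span a triangle component, which a
connected graph on at least four vertices does not have. -/
theorem exists_isExtraEdgeCut_one_of_neighborSet_subset_pair [Finite V] (hG : G.Connected)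
    (hV : 4 ≤ Nat.card V) (hstar : ∀ x, ∃ v ≠ x, G.neighborSet v ≠ {x}) {x y z : V}
    (hmin : ∀ a b, G.Adj a b → degN G x + degN G y ≤ degN G a + degN G b)
    (hxy : G.Adj x y) (hzx : G.Adj z x) (hz : z ∉ ({x, y} : Set V))
    (hN : G.neighborSet z ⊆ {x, y}) :
    ∃ F, IsExtraEdgeCut G 1 F ∧ F.ncard ≤ dOut G {x, y} := by
  have hzy' : z ≠ y := fun h => hz (Or.inr h)
  by_cases hzy : G.Adj z y
  · exfalso
    have hNz : G.neighborSet z = {x, y} := hN.antisymm (Set.pair_subset hzx hzy)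
    have hdz : degN G z = 2 := by rw [degN, hNz, Set.ncard_pair hxy.ne]
    have hNy : {x, z} = G.neighborSet y := Set.eq_of_subset_of_ncard_le
      (Set.pair_subset hxy.symm hzy.symm)
      (by have := hmin z x hzx; rw [Set.ncard_pair hzx.ne.symm]; unfold degN at *; omega)
    have hNx : {y, z} = G.neighborSet x := Set.eq_of_subset_of_ncard_le
      (Set.pair_subset hxy hzx.symm)
      (by have := hmin z y hzy; rw [Set.ncard_pair hzy'.symm]; unfold degN at *; omega)
    have huniv : ({x, y, z} : Set V) = Set.univ := by
      refine eq_univ_of_forall_neighborSet_subset hG (Set.mem_insert x _) ?_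
      rintro v (rfl | rfl | rfl)
      · rw [← hNx]; simp
      · rw [← hNy]; simp [Set.insert_subset_iff]
      · rw [hNz]; simp [Set.insert_subset_iff]
    have := Set.ncard_insert_le x {y, z}
    rw [huniv, Set.ncard_univ, Set.ncard_pair hzy'.symm] at this
    omega
  · have hNz : G.neighborSet z = {x} := (Set.Nonempty.subset_singleton_iff ⟨x, hzx⟩).1
      fun u hu => (hN hu).resolve_right fun h => hzy (Set.mem_singleton_iff.1 h ▸ hu)
    have hdz : degN G z = 1 := by rw [degN, hNz, Set.ncard_singleton]
    have hNy : {x} = G.neighborSet y := Set.eq_of_subset_of_ncard_le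
      (Set.singleton_subset_iff.2 hxy.symm)
      (by have := hmin z x hzx; rw [Set.ncard_singleton]; unfold degN at *; omega)
    obtain ⟨F, hF, hFc⟩ :=
      exists_isExtraEdgeCut_one_of_two_leaves hG (Ne.symm hzy') hNy.symm hNz (hstar x)
    refine ⟨F, hF, ?_⟩
    rw [dOut_pair hxy, show degN G y = 1 by rw [degN, ← hNy, Set.ncard_singleton]]
    omega

theorem exists_isExtraEdgeCut_one_ncard_le_xiH [Finite V] (hG : G.Connected)
    (hV : 4 ≤ Nat.card V) (hstar : ∀ x, ∃ v ≠ x, G.neighborSet v ≠ {x}) :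
    ∃ F, IsExtraEdgeCut G 1 F ∧ F.ncard ≤ xiH G 1 := by
  have : Nontrivial V := Finite.one_lt_card_iff_nontrivial.1 (by omega)
  obtain ⟨v, huv⟩ := hG.preconnected.exists_adj_of_nontrivial (Classical.arbitrary V)
  obtain ⟨x, y, hxy, hξ⟩ := exists_adj_dOut_pair_eq_xiH_one huv
  rw [← hξ]
  have hmin : ∀ a b, G.Adj a b → degN G x + degN G y ≤ degN G a + degN G b := by
    intro a b hab
    have := xiH_one_le_dOut_pair hab
    rw [dOut_pair hab, ← hξ, dOut_pair hxy] at this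
    have := one_le_degN hab
    have := one_le_degN hab.symm
    omega
  by_cases hout : ∀ z ∉ ({x, y} : Set V), ∃ w ∉ ({x, y} : Set V), G.Adj z w
  · refine ⟨_, isExtraEdgeCut_one_edgeBoundary (induce_pair_connected_of_adj hxy) ?_ ?_ hout,
      le_rfl⟩
    · rw [Set.ncard_pair hxy.ne]; omega
    · refine Set.nonempty_compl.2 fun huniv => ?_
      have := Set.ncard_univ V
      rw [← huniv, Set.ncard_pair hxy.ne] at this
      omega
  · push Not at hout
    obtain ⟨z, hz, hzN⟩ := hout
    have hN : G.neighborSet z ⊆ {x, y} := fun w hw => not_not.1 fun h => hzN w h hw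
    obtain ⟨w, hzw⟩ := hG.preconnected.exists_adj_of_nontrivial z
    rcases hN hzw with rfl | hw
    · exact exists_isExtraEdgeCut_one_of_neighborSet_subset_pair hG hV hstar hmin hxy hzw hz hN
    · rw [Set.mem_singleton_iff] at hw
      subst hw
      rw [Set.pair_comm] at hz hN ⊢
      exact exists_isExtraEdgeCut_one_of_neighborSet_subset_pair hG hV hstar
        (fun a b hab => by have := hmin a b hab; omega) hxy.symm hzw hz hN

theorem exists_ne_neighborSet_ne_singleton [Finite V] (hV : 4 ≤ Nat.card V)
    (hleaves : {v | degN G v = 1}.ncard ≤ 2) (x : V) : ∃ v ≠ x, G.neighborSet v ≠ {x} := by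
  by_contra! hstar
  have hsub : ({x}ᶜ : Set V) ⊆ {v | degN G v = 1} := fun v hv => by
    simp only [Set.mem_ofPred_eq, degN, hstar v hv, Set.ncard_singleton]
  have := (Set.ncard_le_ncard hsub).trans hleaves
  rw [Set.ncard_compl, Set.ncard_singleton] at this
  omega

theorem two_mul_le_card_of_lambdaConn [Finite V] [Nonempty V] {k : ℕ} (h : LambdaConn G k) :
    2 * (k + 1) ≤ Nat.card V := by
  obtain ⟨F, -, hnc, hbig⟩ := h
  obtain ⟨a, b, hab⟩ : ∃ a b, ¬(G.deleteEdges F).Reachable a b := by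
    by_contra! hall
    exact hnc (connected_iff _ |>.2 ⟨hall, ‹_›⟩)
  set ca := (G.deleteEdges F).connectedComponentMk a
  set cb := (G.deleteEdges F).connectedComponentMk b
  have hdisj : Disjoint ca.supp cb.supp :=
    Set.disjoint_left.2 fun v ha hb => hab (ConnectedComponent.eq.1 (ha.symm.trans hb))
  have hunion := Set.ncard_union_eq hdisj
  have hle := Set.ncard_le_ncard (Set.subset_univ (ca.supp ∪ cb.supp))
  rw [Set.ncard_univ] at hle
  have := hbig ca
  have := hbig cb
  omega

theorem connected_deleteEdges [Finite V] (hFE : F ⊆ G.edgeSet) (hF : F.Nonempty)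
    (hδ : F.ncard < minDeg G) (hlam : F.ncard < lambdaH G 2) : (G.deleteEdges F).Connected := by
  by_contra hnc
  obtain ⟨c, hc⟩ : ∃ c : (G.deleteEdges F).ConnectedComponent, c.supp.ncard ≤ 2 := by
    by_contra! hall
    have : lambdaH G 2 ≤ F.ncard := Nat.sInf_le ⟨F, ⟨hFE, hnc, hall⟩, rfl⟩
    omega
  have hbdry := dOut_supp_le_ncard c
  have hF0 := hF.ncard_pos
  rcases (show c.supp.ncard = 1 ∨ c.supp.ncard = 2 by have := c.nonempty_supp.ncard_pos; omega)
    with h1 | h2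
  · obtain ⟨v, hv⟩ := Set.ncard_eq_one.1 h1
    rw [hv, dOut_singleton] at hbdry
    have := minDeg_le_degN G v
    omega
  · obtain ⟨u, v, huv, hv⟩ := Set.ncard_eq_two.1 h2
    have hconn := (ConnectedComponent.maximal_connected_induce_supp c).1
    rw [hv] at hconn
    rw [hv, dOut_pair (deleteEdges_le F (adj_of_induce_pair_connected huv hconn))] at hbdry
    have := minDeg_le_degN G u
    have := minDeg_le_degN G v
    omega

theorem exists_supp_ncard_eq_two_of_ncard_add_lt {F' : Set (Sym2 V)} (hFE : F ⊆ G.edgeSet)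
    (hcut : IsExtraEdgeCut (G.deleteEdges F) 1 F') (hlt : F.ncard + F'.ncard < lambdaH G 2) :
    ∃ c : ((G.deleteEdges F).deleteEdges F').ConnectedComponent, c.supp.ncard = 2 := by
  obtain ⟨hF'E, hnc, hbig⟩ := hcut
  by_contra! hne
  rw [deleteEdges_deleteEdges] at hnc hbig hne
  have hcut2 : IsExtraEdgeCut G 2 (F ∪ F') := by
    refine ⟨Set.union_subset hFE fun e he => ?_, hnc, fun c => ?_⟩
    · exact (edgeSet_deleteEdges F ▸ hF'E he : e ∈ G.edgeSet \ F).1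
    · have := hbig c
      have := hne c
      omega
  have : lambdaH G 2 ≤ (F ∪ F').ncard := Nat.sInf_le ⟨_, hcut2, rfl⟩
  have := Set.ncard_union_le F F'
  omega

theorem ncard_setOf_degN_deleteEdges_eq_one_le_two [Finite V] (hF : F.Nonempty)
    (hδ : F.ncard < minDeg G) : {v | degN (G.deleteEdges F) v = 1}.ncard ≤ 2 := by
  obtain ⟨e, he⟩ := hF
  induction e using Sym2.ind with
  | _ a b =>
    have hsub : {v | degN (G.deleteEdges F) v = 1} ⊆ {a, b} := fun p (hp : _ = 1) => by
      have := minDeg_le_degN G p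
      exact Sym2.mem_iff.1 (mem_of_mem_of_ncard_add_degN_deleteEdges_le (G := G) (by omega) he)
    exact (Set.ncard_le_ncard hsub).trans ((Set.ncard_insert_le a {b}).trans (by simp))

theorem exists_adj_deleteEdges_degN_add_degN_sub_two_eq [Finite V] (hF : F.ncard < eta G) :
    ∃ x y, (G.deleteEdges F).Adj x y ∧ degN G x + degN G y - 2 = xiEdge G := by
  obtain ⟨_, ⟨he, x, y, rfl, hxy⟩, heF⟩ := Set.not_subset.1 fun hsub =>
    (Set.ncard_le_ncard hsub).not_gt hF
  exact ⟨x, y, deleteEdges_adj.2 ⟨he, heF⟩, hxy⟩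

theorem superLambda_one_deleteEdges [Finite V]
    (hs : SuperLambda G 1) (heta : minDeg G ≤ eta G) (hFE : F ⊆ G.edgeSet)
    (hlam : F.ncard ≤ lambdaH G 2 - xiEdge G - 1) (hδ : F.ncard ≤ minDeg G - 1) :
    SuperLambda (G.deleteEdges F) 1 := by
  rcases F.eq_empty_or_nonempty with rfl | hF
  · rwa [deleteEdges_empty]
  have hF0 := hF.ncard_pos
  have := hs.1.nonempty
  have hV := two_mul_le_card_of_lambdaConn hs.2.1
  have hG' := connected_deleteEdges hFE hF (by omega) (by omega)
  obtain ⟨x, y, hxy, hξ⟩ :=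
    exists_adj_deleteEdges_degN_add_degN_sub_two_eq (G := G) (F := F) (by omega)
  have hξ' : xiH (G.deleteEdges F) 1 ≤ xiEdge G := by
    have := (xiH_one_le_dOut_pair hxy).trans dOut_deleteEdges_le
    rwa [dOut_pair (deleteEdges_le F hxy), hξ] at this
  refine superLambda_one_of_forall_ncard_le_xiH hG' ?_ fun F' hF' hle =>
    exists_supp_ncard_eq_two_of_ncard_add_lt hFE hF' (by omega)
  exact exists_isExtraEdgeCut_one_ncard_le_xiH hG' (by omega) <|
    exists_ne_neighborSet_ne_singleton (by omega) <|
      ncard_setOf_degN_deleteEdges_eq_one_le_two hF (by omega)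

theorem le_rhoH [Nontrivial V] {h m : ℕ}
    (hm : ∀ F ⊆ G.edgeSet, F.ncard ≤ m → SuperLambda (G.deleteEdges F) h) :
    m ≤ rhoH G h := by
  refine le_csSup ⟨G.edgeSet.ncard, fun k hk => ?_⟩ hm
  by_contra! hlt
  obtain ⟨v, hv⟩ := (hk G.edgeSet subset_rfl hlt.le).1.preconnected.exists_adj_of_nontrivial
    (Classical.arbitrary V)
  exact (deleteEdges_adj.1 hv).2 (deleteEdges_adj.1 hv).1

end SimpleGraph

theorem stmt5_general {V : Type*} [Fintype V] (G : SimpleGraph V)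
    (hs : SuperLambda G 1) (heta : minDeg G ≤ eta G) :
    min (lambdaH G 2 - xiEdge G - 1) (minDeg G - 1) ≤ rhoH G 1 := by
  have := hs.1.nonempty
  have : Nontrivial V := Finite.one_lt_card_iff_nontrivial.1 <| by
    have := two_mul_le_card_of_lambdaConn hs.2.1
    omega
  exact le_rhoH fun F hFE hF => superLambda_one_deleteEdges hs heta hFE
    (hF.trans (min_le_left _ _)) (hF.trans (min_le_right _ _))

/-- If `G` is `λ''`-connected, super-`λ'`, and `η(G) ≥ δ(G)`, then
`ρ'(G) ≥ min {λ''(G) - ξ(G) - 1, δ(G) - 1}`. -/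
theorem stmt5 {V : Type*} [Fintype V] (G : SimpleGraph V)
    (hl2 : LambdaConn G 2) (hs : SuperLambda G 1) (heta : minDeg G ≤ eta G) :
    min (lambdaH G 2 - xiEdge G - 1) (minDeg G - 1) ≤ rhoH G 1 :=
  stmt5_general G hs heta
end
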